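/- arXiv:1001.1028 — 2 statements merged into one kernel-verified Lean document; each statement's English description precedes it below -/
import Mathlib

section
/- The entropy functional E(γ) = ∫_0^1 e(γ′(x)) dx is strictly convex on the set ℒ⁰ of 1-Lipschitz functions γ : [0,1] → ℝ with γ(0) = γ(1) = 0: for γ₁ ≠ γ₂ in ℒ⁰ and t ∈ (0,1), E(tγ₁ + (1−t)γ₂) < t·E(γ₁) + (1−t)·E(γ₂). -/
/-!
The integrand `e` is strictly convex on `[-1, 1]`: it is `½ (φ(1 + x) + φ(1 - x))` with
`φ y = y log y`. A 1-Lipschitz `γ` is differentiable almost everywhere with `|γ'| ≤ 1`, so almost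
everywhere the derivative of `t γ₁ + (1 - t) γ₂` is `t γ₁' + (1 - t) γ₂'`, and the convexity
inequality holds for the integrands. It is strict on a set of positive measure: Lipschitz functions
are absolutely continuous, so if `γ₁' = γ₂'` almost everywhere on `[0, 1]`, the fundamental theorem
of calculus and `γ₁ 0 = γ₂ 0` give `γ₁ = γ₂` on `[0, 1]`.
-/

open MeasureTheory Set

noncomputable def entFn (x : ℝ) : ℝ :=
  (1 / 2) * ((1 + x) * Real.log (1 + x) + (1 - x) * Real.log (1 - x))

def L0 : Set (ℝ → ℝ) := {γ | LipschitzWith 1 γ ∧ γ 0 = 0 ∧ γ 1 = 0}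

noncomputable def entE (γ : ℝ → ℝ) : ℝ := ∫ x in (0:ℝ)..1, entFn (deriv γ x)

theorem StrictConvexOn.const_mul {E : Type*} [AddCommMonoid E] [SMul ℝ E] {s : Set E}
    {f : E → ℝ} (hf : StrictConvexOn ℝ s f) {c : ℝ} (hc : 0 < c) :
    StrictConvexOn ℝ s fun x => c * f x := by
  refine ⟨hf.1, fun x hx y hy hxy a b ha hb hab => ?_⟩
  calc c * f (a • x + b • y) < c * (a • f x + b • f y) := by
        gcongr; exact hf.2 hx hy hxy ha hb hab
    _ = a • (c * f x) + b • (c * f y) := by simp only [smul_eq_mul]; ring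

theorem strictConvexOn_one_add_mul_log :
    StrictConvexOn ℝ (Ici (-1)) fun x : ℝ => (1 + x) * Real.log (1 + x) := by
  have h := Real.strictConvexOn_mul_log.translate_right 1
  rwa [preimage_const_add_Ici, zero_sub] at h

theorem convexOn_one_sub_mul_log :
    ConvexOn ℝ (Iic 1) fun x : ℝ => (1 - x) * Real.log (1 - x) := by
  have h := Real.convexOn_mul_log.comp_affineMap (AffineMap.const ℝ ℝ (1:ℝ) - AffineMap.id ℝ ℝ)
  have hg : ⇑(AffineMap.const ℝ ℝ (1:ℝ) - AffineMap.id ℝ ℝ) = fun x => 1 - x := rfl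
  rwa [hg, preimage_const_sub_Ici, sub_zero] at h

theorem strictConvexOn_entFn : StrictConvexOn ℝ (Icc (-1) 1) entFn :=
  ((strictConvexOn_one_add_mul_log.subset Icc_subset_Ici_self (convex_Icc _ _)).add_convexOn
    (convexOn_one_sub_mul_log.subset Icc_subset_Iic_self (convex_Icc _ _))).const_mul one_half_pos

theorem continuous_entFn : Continuous entFn := by
  unfold entFn; fun_prop

theorem LipschitzWith.deriv_mem_Icc {f : ℝ → ℝ} {K : NNReal} (hf : LipschitzWith K f) (x : ℝ) :
    deriv f x ∈ Icc (-(K : ℝ)) K :=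
  abs_le.mp (norm_deriv_le_of_lipschitz hf)

theorem LipschitzWith.eqOn_of_deriv_ae_eq {f g : ℝ → ℝ} {K L : NNReal} (hf : LipschitzWith K f)
    (hg : LipschitzWith L g) {a b : ℝ} (ha : f a = g a)
    (hfg : deriv f =ᵐ[volume.restrict (Ioc a b)] deriv g) : EqOn f g (Icc a b) := by
  intro x hx
  have hint : ∫ y in a..x, deriv f y = ∫ y in a..x, deriv g y := by
    rw [intervalIntegral.integral_of_le hx.1, intervalIntegral.integral_of_le hx.1]
    exact integral_congr_ae (ae_restrict_of_ae_restrict_of_subset (Ioc_subset_Ioc_right hx.2) hfg)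
  rw [hf.lipschitzOnWith.absolutelyContinuousOnInterval.integral_deriv_eq_sub,
    hg.lipschitzOnWith.absolutelyContinuousOnInterval.integral_deriv_eq_sub, ha] at hint
  linarith

theorem Continuous.intervalIntegrable_comp_of_mem_isCompact {E : Type*} [NormedAddCommGroup E]
    {φ : ℝ → E} (hφ : Continuous φ) {K : Set ℝ} (hK : IsCompact K) {u : ℝ → ℝ}
    (hu : Measurable u) (huK : ∀ x, u x ∈ K) (μ : Measure ℝ) [IsLocallyFiniteMeasure μ]
    (a b : ℝ) : IntervalIntegrable (fun x => φ (u x)) μ a b := by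
  obtain ⟨C, hC⟩ := hK.exists_bound_of_continuousOn hφ.continuousOn
  rw [intervalIntegrable_iff]
  exact IntegrableOn.of_bound measure_Ioc_lt_top
    (hφ.comp_aestronglyMeasurable hu.aestronglyMeasurable) C (ae_of_all _ fun x => hC _ (huK x))

theorem StrictConvexOn.intervalIntegral_comp_lt {φ : ℝ → ℝ} {s : Set ℝ}
    (hφ : StrictConvexOn ℝ s φ) {μ : Measure ℝ} {a b : ℝ} (hab : a ≤ b) {u v : ℝ → ℝ}
    (hu : ∀ᵐ x ∂μ.restrict (Ioc a b), u x ∈ s) (hv : ∀ᵐ x ∂μ.restrict (Ioc a b), v x ∈ s)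
    (huv : μ.restrict (Ioc a b) {x | u x ≠ v x} ≠ 0) {t : ℝ} (ht₀ : 0 < t) (ht₁ : t < 1)
    (hi : IntervalIntegrable (fun x => φ (t * u x + (1 - t) * v x)) μ a b)
    (hiu : IntervalIntegrable (fun x => φ (u x)) μ a b)
    (hiv : IntervalIntegrable (fun x => φ (v x)) μ a b) :
    ∫ x in a..b, φ (t * u x + (1 - t) * v x) ∂μ <
      t * ∫ x in a..b, φ (u x) ∂μ + (1 - t) * ∫ x in a..b, φ (v x) ∂μ := by
  have hs : 0 < 1 - t := sub_pos.mpr ht₁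
  rw [← intervalIntegral.integral_const_mul, ← intervalIntegral.integral_const_mul,
    ← intervalIntegral.integral_add (hiu.const_mul t) (hiv.const_mul (1 - t))]
  refine intervalIntegral.integral_lt_integral_of_ae_le_of_measure_setOfPred_lt_ne_zero hab hi
    ((hiu.const_mul t).add (hiv.const_mul (1 - t))) ?_ ?_
  · filter_upwards [hu, hv] with x hux hvx
    exact hφ.convexOn.2 hux hvx ht₀.le hs.le (add_sub_cancel t 1)
  · contrapose! huv
    rw [measure_eq_zero_iff_ae_notMem] at huv ⊢
    filter_upwards [hu, hv, huv] with x hux hvx hlt hne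
    exact hlt (hφ.2 hux hvx hne ht₀ hs (add_sub_cancel t 1))

/-- Strict convexity of the entropy functional on `L0`. -/
theorem entE_strictConvex (γ₁ γ₂ : ℝ → ℝ) (h₁ : γ₁ ∈ L0) (h₂ : γ₂ ∈ L0)
    (hne : ∃ x ∈ Set.Icc (0:ℝ) 1, γ₁ x ≠ γ₂ x) (t : ℝ) (ht : t ∈ Set.Ioo (0:ℝ) 1) :
    entE (fun x => t * γ₁ x + (1 - t) * γ₂ x) < t * entE γ₁ + (1 - t) * entE γ₂ := by
  obtain ⟨hL₁, h₁0, -⟩ := h₁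
  obtain ⟨hL₂, h₂0, -⟩ := h₂
  have hderiv : entE (fun x => t * γ₁ x + (1 - t) * γ₂ x) =
      ∫ x in (0:ℝ)..1, entFn (t * deriv γ₁ x + (1 - t) * deriv γ₂ x) := by
    refine intervalIntegral.integral_congr_ae ?_
    filter_upwards [hL₁.ae_differentiableAt_real, hL₂.ae_differentiableAt_real] with x hx₁ hx₂ _
    exact congrArg entFn ((hx₁.hasDerivAt.const_mul t).add (hx₂.hasDerivAt.const_mul (1 - t))).deriv
  have hderiv_ne : volume.restrict (Ioc 0 1) {x | deriv γ₁ x ≠ deriv γ₂ x} ≠ 0 := by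
    obtain ⟨x₀, hx₀, hγx₀⟩ := hne
    contrapose! hγx₀
    exact hL₁.eqOn_of_deriv_ae_eq hL₂ (h₁0.trans h₂0.symm) (ae_iff.mpr hγx₀) hx₀
  have hmem : ∀ {γ : ℝ → ℝ}, LipschitzWith 1 γ → ∀ x, deriv γ x ∈ Icc (-1) 1 := fun hγ x => by
    simpa using hγ.deriv_mem_Icc x
  have hmem_combo : ∀ x, t * deriv γ₁ x + (1 - t) * deriv γ₂ x ∈ Icc (-1) 1 := fun x =>
    convex_Icc _ _ (hmem hL₁ x) (hmem hL₂ x) ht.1.le (sub_pos.mpr ht.2).le (add_sub_cancel t 1)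
  have hint : ∀ {u : ℝ → ℝ}, Measurable u → (∀ x, u x ∈ Icc (-1) 1) →
      IntervalIntegrable (fun x => entFn (u x)) volume 0 1 := fun hu huK =>
    continuous_entFn.intervalIntegrable_comp_of_mem_isCompact isCompact_Icc hu huK _ _ _
  rw [hderiv]
  exact strictConvexOn_entFn.intervalIntegral_comp_lt zero_le_one (ae_of_all _ (hmem hL₁))
    (ae_of_all _ (hmem hL₂)) hderiv_ne ht.1 ht.2 (hint (by fun_prop) hmem_combo)
    (hint (measurable_deriv γ₁) (hmem hL₁)) (hint (measurable_deriv γ₂) (hmem hL₂))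
end

section
/- The Lebesgue measure of the set {z = (x,y) ∈ 𝒟 : E(γ_z) ≤ δ} is Θ(√δ) as δ → 0: there exist constants c, C > 0 and δ₀ > 0 such that for all 0 < δ < δ₀, c√δ ≤ Leb{z ∈ 𝒟 : E(γ_z) ≤ δ} ≤ C√δ. -/
open MeasureTheory

/-- Entropy of the piecewise-linear curve through (0,0), z, (1,0). -/
noncomputable def entTent (z : ℝ × ℝ) : ℝ :=
  z.1 * entFn (z.2 / z.1) + (1 - z.1) * entFn (z.2 / (1 - z.1))

/-- The rotated square with unit diagonal. -/
def diamond : Set (ℝ × ℝ) := {z | 0 ≤ z.1 ∧ z.1 ≤ 1 ∧ |z.2| ≤ min z.1 (1 - z.1)}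

/-!
For `|u| ≤ 1` the entropy density satisfies `u² / 6 ≤ e(u) ≤ u²`. Hence on the diamond
`E(γ_z)` lies between `q(z) / 6` and `q(z)`, where `q(x, y) = y² / x + y² / (1 - x)`.
Since `q ≥ 4 y²` for `0 < x < 1`, the region `E ≤ δ` lies in the strip `|y| ≤ 2 √δ` of area `4 √δ`;
since `q ≤ 8 y²` for `x ∈ [1/4, 3/4]`, it contains the rectangle `[1/4, 3/4] × [-√δ/4, √δ/4]`
of area `√δ / 4`.
-/

open Real Set

lemma mul_log_le_mul_sub_one {t : ℝ} (ht : 0 ≤ t) : t * log t ≤ t * (t - 1) := by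
  rcases ht.eq_or_lt with rfl | ht
  · simp
  · exact mul_le_mul_of_nonneg_left (log_le_sub_one_of_pos ht) ht.le

lemma entFn_neg (u : ℝ) : entFn (-u) = entFn u := by
  simp only [entFn, sub_neg_eq_add, ← sub_eq_add_neg]
  ring

lemma entFn_le_sq {u : ℝ} (hu : |u| ≤ 1) : entFn u ≤ u ^ 2 := by
  obtain ⟨hl, hr⟩ := abs_le.1 hu
  have h_add := mul_log_le_mul_sub_one (t := 1 + u) (by linarith)
  have h_sub := mul_log_le_mul_sub_one (t := 1 - u) (by linarith)
  unfold entFn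
  nlinarith

lemma sq_le_six_mul_entFn_of_nonneg {u : ℝ} (h0 : 0 ≤ u) (h1 : u ≤ 1) : u ^ 2 ≤ 6 * entFn u := by
  have h_add : 2 * u / (u + 2) ≤ log (1 + u) := le_log_one_add_of_nonneg h0
  have h_sub : (1 - u) - 1 ≤ (1 - u) * log (1 - u) := self_sub_one_le_mul_log (by linarith)
  have h_add' : 2 * u * (1 + u) / (u + 2) ≤ (1 + u) * log (1 + u) := by
    rw [mul_div_right_comm, mul_comm (1 + u)]
    exact mul_le_mul_of_nonneg_right h_add (by linarith)
  have key : u ^ 2 / 3 ≤ 2 * u * (1 + u) / (u + 2) - u := by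
    rw [le_sub_iff_add_le, div_add' _ _ _ (by positivity), div_le_div_iff₀ (by positivity)
      (by positivity)]
    nlinarith
  unfold entFn
  linarith

lemma sq_le_six_mul_entFn {u : ℝ} (hu : |u| ≤ 1) : u ^ 2 ≤ 6 * entFn u := by
  rcases le_total 0 u with h | h
  · exact sq_le_six_mul_entFn_of_nonneg h (abs_le.1 hu).2
  · simpa [entFn_neg] using
      sq_le_six_mul_entFn_of_nonneg (neg_nonneg.2 h) (by linarith [(abs_le.1 hu).1])

lemma mul_entFn_div_le {x y : ℝ} (hx : 0 < x) (hy : |y| ≤ x) :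
    x * entFn (y / x) ≤ y ^ 2 / x := by
  have hu : |y / x| ≤ 1 := by rwa [abs_div, abs_of_pos hx, div_le_one hx]
  calc x * entFn (y / x) ≤ x * (y / x) ^ 2 := by gcongr; exact entFn_le_sq hu
    _ = y ^ 2 / x := by field_simp

lemma sq_div_le_six_mul_mul_entFn_div {x y : ℝ} (hx : 0 < x) (hy : |y| ≤ x) :
    y ^ 2 / x ≤ 6 * (x * entFn (y / x)) := by
  have hu : |y / x| ≤ 1 := by rwa [abs_div, abs_of_pos hx, div_le_one hx]
  calc y ^ 2 / x = x * (y / x) ^ 2 := by field_simp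
    _ ≤ x * (6 * entFn (y / x)) := by gcongr; exact sq_le_six_mul_entFn hu
    _ = 6 * (x * entFn (y / x)) := by ring

noncomputable def tentQuad (z : ℝ × ℝ) : ℝ := z.2 ^ 2 / z.1 + z.2 ^ 2 / (1 - z.1)

lemma entTent_le_tentQuad {z : ℝ × ℝ} (hx0 : 0 < z.1) (hx1 : z.1 < 1)
    (hy : |z.2| ≤ min z.1 (1 - z.1)) : entTent z ≤ tentQuad z :=
  add_le_add (mul_entFn_div_le hx0 (hy.trans (min_le_left _ _)))
    (mul_entFn_div_le (sub_pos.2 hx1) (hy.trans (min_le_right _ _)))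

lemma tentQuad_le_six_mul_entTent {z : ℝ × ℝ} (hx0 : 0 < z.1) (hx1 : z.1 < 1)
    (hy : |z.2| ≤ min z.1 (1 - z.1)) :
    tentQuad z ≤ 6 * entTent z := by
  have h1 := sq_div_le_six_mul_mul_entFn_div hx0 (hy.trans (min_le_left _ _))
  have h2 := sq_div_le_six_mul_mul_entFn_div (sub_pos.2 hx1) (hy.trans (min_le_right _ _))
  rw [tentQuad, entTent]
  linarith

lemma four_mul_sq_le_tentQuad {z : ℝ × ℝ} (hx0 : 0 < z.1) (hx1 : z.1 < 1) :
    4 * z.2 ^ 2 ≤ tentQuad z := by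
  have hx1' : 0 < 1 - z.1 := sub_pos.2 hx1
  rw [tentQuad, div_add_div _ _ hx0.ne' hx1'.ne', le_div_iff₀ (by positivity)]
  nlinarith [sq_nonneg (z.2 * (1 - 2 * z.1))]

lemma tentQuad_le_eight_mul_sq {z : ℝ × ℝ} (hx : z.1 ∈ Icc (1 / 4) (3 / 4)) :
    tentQuad z ≤ 8 * z.2 ^ 2 := by
  obtain ⟨hl, hr⟩ := hx
  have h1 : z.2 ^ 2 / z.1 ≤ 4 * z.2 ^ 2 := by
    rw [div_le_iff₀ (by linarith)]; nlinarith [sq_nonneg z.2]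
  have h2 : z.2 ^ 2 / (1 - z.1) ≤ 4 * z.2 ^ 2 := by
    rw [div_le_iff₀ (by linarith)]; nlinarith [sq_nonneg z.2]
  rw [tentQuad]
  linarith

lemma sq_le_two_mul_entTent {z : ℝ × ℝ} (hz : z ∈ diamond) : z.2 ^ 2 ≤ 2 * entTent z := by
  obtain ⟨-, -, hy⟩ := hz
  rcases eq_or_ne z.2 0 with h0 | h0
  · simp [entTent, entFn, h0]
  have hpos : 0 < min z.1 (1 - z.1) := (abs_pos.2 h0).trans_le hy
  have hx0 : 0 < z.1 := hpos.trans_le (min_le_left _ _)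
  have hx1 : z.1 < 1 := sub_pos.1 (hpos.trans_le (min_le_right _ _))
  have h4 := four_mul_sq_le_tentQuad hx0 hx1
  have h6 := tentQuad_le_six_mul_entTent hx0 hx1 hy
  nlinarith [sq_nonneg z.2]

lemma lowEntropy_subset_strip {δ : ℝ} (hδ : 0 ≤ δ) :
    {z ∈ diamond | entTent z ≤ δ} ⊆ Icc 0 1 ×ˢ Icc (-(2 * √δ)) (2 * √δ) := by
  rintro z ⟨hz, hE⟩
  refine ⟨⟨hz.1, hz.2.1⟩, abs_le_of_sq_le_sq' ?_ (by positivity)⟩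
  rw [mul_pow, sq_sqrt hδ]
  linarith [sq_le_two_mul_entTent hz]

lemma rect_subset_lowEntropy {δ : ℝ} (hδ : 0 ≤ δ) (hδ1 : δ ≤ 1) :
    Icc (1 / 4) (3 / 4) ×ˢ Icc (-(√δ / 4)) (√δ / 4) ⊆ {z ∈ diamond | entTent z ≤ δ} := by
  rintro z ⟨⟨hl, hr⟩, hy⟩
  have hy : |z.2| ≤ √δ / 4 := abs_le.2 hy
  have hs1 : √δ ≤ 1 := sqrt_le_one.2 hδ1
  have hy' : |z.2| ≤ min z.1 (1 - z.1) := le_min (by linarith) (by linarith)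
  refine ⟨⟨by linarith, by linarith, hy'⟩, ?_⟩
  have hy2 : z.2 ^ 2 ≤ δ / 16 := by
    rw [← sq_abs]
    calc |z.2| ^ 2 ≤ (√δ / 4) ^ 2 := by gcongr
      _ = δ / 16 := by rw [div_pow, sq_sqrt hδ]; norm_num
  calc entTent z ≤ tentQuad z := entTent_le_tentQuad (by linarith) (by linarith) hy'
    _ ≤ 8 * z.2 ^ 2 := tentQuad_le_eight_mul_sq ⟨hl, hr⟩
    _ ≤ δ := by linarith

lemma volume_real_Icc_prod_Icc {a b c d : ℝ} (hab : a ≤ b) (hcd : c ≤ d) :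
    volume.real (Icc a b ×ˢ Icc c d) = (b - a) * (d - c) := by
  rw [Measure.volume_eq_prod, measureReal_prod_prod, Real.volume_real_Icc_of_le hab,
    Real.volume_real_Icc_of_le hcd]

theorem measure_low_entropy_region_sqrt :
    ∃ c C δ₀ : ℝ, 0 < c ∧ 0 < C ∧ 0 < δ₀ ∧
      ∀ δ : ℝ, 0 < δ → δ < δ₀ →
        c * Real.sqrt δ ≤ (volume {z ∈ diamond | entTent z ≤ δ}).toReal ∧
        (volume {z ∈ diamond | entTent z ≤ δ}).toReal ≤ C * Real.sqrt δ := by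
  refine ⟨1 / 4, 4, 1, by norm_num, by norm_num, by norm_num, fun δ hδ hδ1 => ?_⟩
  have hs : 0 ≤ √δ := sqrt_nonneg δ
  have hstrip := lowEntropy_subset_strip hδ.le
  have hfin : volume (Icc (0 : ℝ) 1 ×ˢ Icc (-(2 * √δ)) (2 * √δ)) ≠ ⊤ :=
    (isCompact_Icc.prod isCompact_Icc).measure_ne_top
  simp only [← measureReal_def]
  constructor
  · calc 1 / 4 * √δ = volume.real (Icc (1 / 4 : ℝ) (3 / 4) ×ˢ Icc (-(√δ / 4)) (√δ / 4)) := by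
          rw [volume_real_Icc_prod_Icc (by norm_num) (by linarith)]; ring
      _ ≤ _ := measureReal_mono (rect_subset_lowEntropy hδ.le hδ1.le)
          (ne_top_of_le_ne_top hfin (measure_mono hstrip))
  · calc _ ≤ volume.real (Icc (0 : ℝ) 1 ×ˢ Icc (-(2 * √δ)) (2 * √δ)) :=
          measureReal_mono hstrip hfin
      _ = 4 * √δ := by rw [volume_real_Icc_prod_Icc zero_le_one (by linarith)]; ring
end
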